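/- If f − E_k[f] ≤ 1 pointwise for every k ∈ {1,…,n}, then for every β > 0, S_f(β) ≤ (β e^β − e^β + 1) · E_{βf}[ Σ²(f) ], where Σ²(f) = Σ_{k=1}^n σ²_k[f] is the sum of the conditional variances. -/

import Mathlib

/-!
Write `F = e^{βf}` and `ψ(t) = t e^t - e^t + 1`; then `S_f(β) = Ent(F) / E[F]`.

Entropy tensorizes over the product measure, `Ent(F) ≤ ∑ₖ E[Ent_k(F)]`: telescope along the
marginals of `F` over growing sets of coordinates and bound each increment by Gibbs' variational
inequality in the one coordinate being integrated out.

In a single coordinate, with `m = E_k[f]`, the variational formula for entropy evaluated at the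
constant `e^{βm}` gives `Ent_k(F) ≤ e^{βm} E_k[ψ(β(f - m))]`. Since `f - m ≤ 1`,
`ψ(β(f - m)) ≤ ψ(β) (f - m)²`; together with Jensen's `e^{βm} ≤ E_k[F]` this yields
`Ent_k(F) ≤ ψ(β) σ²_k[f] E_k[F]`. As `σ²_k[f]` does not depend on the `k`-th coordinate,
`E[σ²_k[f] E_k[F]] = E[σ²_k[f] F]`, and summing over `k` gives the claim.
-/

open MeasureTheory Real

section ProductSpace

variable {n : ℕ} {Ω : Fin n → Type*} [∀ k, MeasurableSpace (Ω k)]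

/-- Thermal expectation `E_{βf}[g] = E[g e^{βf}] / E[e^{βf}]`. -/
noncomputable def thermalExp {α : Type*} [MeasurableSpace α] (ν : Measure α)
    (β : ℝ) (f g : α → ℝ) : ℝ :=
  (∫ x, g x * Real.exp (β * f x) ∂ν) / ∫ x, Real.exp (β * f x) ∂ν

/-- Canonical entropy `S_f(β) = β E_{βf}[f] − ln Z_{βf}`. -/
noncomputable def canEntropy {α : Type*} [MeasurableSpace α] (ν : Measure α)
    (f : α → ℝ) (β : ℝ) : ℝ :=
  β * thermalExp ν β f f - Real.log (∫ x, Real.exp (β * f x) ∂ν)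

/-- Conditional expectation `E_k[g](x) = ∫ g(x_{y,k}) dμ_k(y)`. -/
noncomputable def condExpK (μ : ∀ k, Measure (Ω k)) (k : Fin n)
    (g : (∀ i, Ω i) → ℝ) (x : ∀ i, Ω i) : ℝ :=
  ∫ y, g (Function.update x k y) ∂(μ k)

/-- Conditional thermal expectation `E_{k,βf}[g](x) = E_k[g e^{βf}](x) / E_k[e^{βf}](x)`. -/
noncomputable def condThermalExpK (μ : ∀ k, Measure (Ω k)) (k : Fin n) (β : ℝ)
    (f g : (∀ i, Ω i) → ℝ) (x : ∀ i, Ω i) : ℝ :=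
  (∫ y, g (Function.update x k y) * Real.exp (β * f (Function.update x k y)) ∂(μ k)) /
    ∫ y, Real.exp (β * f (Function.update x k y)) ∂(μ k)

/-- Conditional entropy `S_{k,f}(β)(x) = β E_{k,βf}[f](x) − ln Z_{k,βf}(x)`. -/
noncomputable def condEntropyK (μ : ∀ k, Measure (Ω k)) (k : Fin n)
    (f : (∀ i, Ω i) → ℝ) (β : ℝ) (x : ∀ i, Ω i) : ℝ :=
  β * condThermalExpK μ k β f f x -
    Real.log (∫ y, Real.exp (β * f (Function.update x k y)) ∂(μ k))

/-- Conditional variance `σ²_k[g](x) = E_k[(g − E_k[g])²](x)`. -/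
noncomputable def condVarK (μ : ∀ k, Measure (Ω k)) (k : Fin n)
    (g : (∀ i, Ω i) → ℝ) (x : ∀ i, Ω i) : ℝ :=
  ∫ y, (g (Function.update x k y) - condExpK μ k g x) ^ 2 ∂(μ k)

/-- Conditional supremum `(sup_k g)(x) = sup_{y} g(x_{y,k})`. -/
noncomputable def condSupK (k : Fin n) (g : (∀ i, Ω i) → ℝ) (x : ∀ i, Ω i) : ℝ :=
  ⨆ y : Ω k, g (Function.update x k y)

/-- Conditional infimum `(inf_k g)(x) = inf_{y} g(x_{y,k})`. -/
noncomputable def condInfK (k : Fin n) (g : (∀ i, Ω i) → ℝ) (x : ∀ i, Ω i) : ℝ :=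
  ⨅ y : Ω k, g (Function.update x k y)

/-- Worst-case variance proxy `Dg = Σ_k (g − inf_k g)²`. -/
noncomputable def Dproxy (g : (∀ i, Ω i) → ℝ) (x : ∀ i, Ω i) : ℝ :=
  ∑ k, (g x - condInfK k g x) ^ 2

end ProductSpace

open ProbabilityTheory

noncomputable def psi (t : ℝ) : ℝ := t * exp t - exp t + 1

lemma hasDerivAt_psi (t : ℝ) : HasDerivAt psi (t * exp t) t := by
  have h := (((hasDerivAt_id' t).mul (hasDerivAt_exp t)).sub (hasDerivAt_exp t)).add_const 1
  exact h.congr_deriv (by ring)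

lemma psi_nonneg (t : ℝ) : 0 ≤ psi t := by
  have h : (1 - t) * exp t ≤ 1 := by
    calc (1 - t) * exp t ≤ exp (-t) * exp t := by
          gcongr
          linarith [add_one_le_exp (-t)]
      _ = 1 := by rw [← exp_add, neg_add_cancel, exp_zero]
  unfold psi
  linarith

/-- The derivative in `β` of `psi β * t ^ 2 - psi (β * t)` is `β t² (e^β - e^{βt}) ≥ 0`. -/
lemma psi_mul_le_psi_mul_sq {β t : ℝ} (hβ : 0 ≤ β) (ht : t ≤ 1) : psi (β * t) ≤ psi β * t ^ 2 := by
  set φ : ℝ → ℝ := fun b => psi b * t ^ 2 - psi (b * t)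
  have hφ : ∀ b, HasDerivAt φ (b * t ^ 2 * (exp b - exp (b * t))) b := by
    intro b
    have h := ((hasDerivAt_psi b).mul_const (t ^ 2)).sub
      ((hasDerivAt_psi (b * t)).comp b ((hasDerivAt_id' b).mul_const t))
    exact h.congr_deriv (by ring)
  have hmono : MonotoneOn φ (Set.Ici 0) := by
    refine monotoneOn_of_hasDerivWithinAt_nonneg (convex_Ici 0)
      (fun b _ => (hφ b).continuousAt.continuousWithinAt)
      (fun b _ => (hφ b).hasDerivWithinAt) fun b hb => ?_
    rw [interior_Ici, Set.mem_Ioi] at hb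
    have : b * t ≤ b := by nlinarith
    exact mul_nonneg (by positivity) (sub_nonneg.2 (exp_le_exp.2 this))
  have h := hmono (Set.mem_Ici.2 le_rfl) hβ hβ
  have h0 : psi 0 = 0 := by simp [psi]
  simp only [φ, zero_mul, h0] at h
  linarith

noncomputable def entropy {α : Type*} [MeasurableSpace α] (ρ : Measure α) (φ : α → ℝ) : ℝ :=
  ∫ z, φ z * log (φ z) ∂ρ - (∫ z, φ z ∂ρ) * log (∫ z, φ z ∂ρ)

lemma mul_log_add_sub_le_mul_log {x c : ℝ} (hx : 0 < x) (hc : 0 < c) :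
    x * log c + x - c ≤ x * log x := by
  have h := mul_le_mul_of_nonneg_left (log_le_sub_one_of_pos (div_pos hc hx)) hx.le
  rw [log_div hc.ne' hx.ne', mul_sub_one, mul_div_cancel₀ _ hx.ne'] at h
  linarith

lemma abs_log_le_of_mem_Icc {ε A t : ℝ} (hε : 0 < ε) (ht : t ∈ Set.Icc ε A) :
    |log t| ≤ max |log ε| |log A| :=
  abs_le_max_abs_abs (log_le_log hε ht.1) (log_le_log (hε.trans_le ht.1) ht.2)

lemma exp_mul_mem_Icc_of_abs_le {β C y : ℝ} (hβ : 0 ≤ β) (hy : |y| ≤ C) :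
    exp (β * y) ∈ Set.Icc (exp (-(β * C))) (exp (β * C)) :=
  ⟨exp_le_exp.2 (by nlinarith [neg_abs_le y]), exp_le_exp.2 (by nlinarith [le_abs_self y])⟩

section OneDimensional

variable {α : Type*} [MeasurableSpace α] {ρ : Measure α}

lemma integrable_comp_of_abs_le [IsFiniteMeasure ρ] {g : α → ℝ} {C : ℝ} (hg : Measurable g)
    (hC : ∀ z, |g z| ≤ C) {h : ℝ → ℝ} (hh : Continuous h) :
    Integrable (fun z => h (g z)) ρ := by
  obtain ⟨M, hM⟩ :=
    isCompact_Icc.exists_bound_of_continuousOn (hh.continuousOn (s := Set.Icc (-C) C))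
  exact .of_bound (hh.measurable.comp hg).aestronglyMeasurable M
    (ae_of_all _ fun z => hM _ (abs_le.1 (hC z)))

lemma integrable_mul_log_of_mem_Icc [IsFiniteMeasure ρ] {φ G : α → ℝ} {ε A : ℝ} (hε : 0 < ε)
    (hφm : Measurable φ) (hGm : Measurable G)
    (hφ : ∀ z, φ z ∈ Set.Icc ε A) (hG : ∀ z, G z ∈ Set.Icc ε A) :
    Integrable (fun z => φ z * log (G z)) ρ :=
  (Integrable.of_mem_Icc ε A hφm.aemeasurable (ae_of_all _ hφ)).mul_bdd
    hGm.log.aestronglyMeasurable (ae_of_all _ fun z => abs_log_le_of_mem_Icc hε (hG z))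

variable [IsProbabilityMeasure ρ]

lemma integral_mem_Icc_of_mem_Icc {φ : α → ℝ} {a b : ℝ} (hφm : Measurable φ)
    (hφ : ∀ z, φ z ∈ Set.Icc a b) : ∫ z, φ z ∂ρ ∈ Set.Icc a b := by
  have hi := Integrable.of_mem_Icc a b hφm.aemeasurable (ae_of_all ρ hφ)
  constructor
  · simpa using integral_mono (integrable_const a) hi fun z => (hφ z).1
  · simpa using integral_mono hi (integrable_const b) fun z => (hφ z).2

/-- Gibbs' variational inequality; it follows by integrating `log u ≤ u - 1` at
`u = G ∫ φ / (φ ∫ G)`. -/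
lemma integral_mul_log_sub_le_entropy {φ G : α → ℝ} {ε A : ℝ} (hε : 0 < ε)
    (hφm : Measurable φ) (hGm : Measurable G)
    (hφ : ∀ z, φ z ∈ Set.Icc ε A) (hG : ∀ z, G z ∈ Set.Icc ε A) :
    ∫ z, φ z * log (G z) ∂ρ - (∫ z, φ z ∂ρ) * log (∫ z, G z ∂ρ) ≤ entropy ρ φ := by
  set I := ∫ z, φ z ∂ρ
  set c := ∫ z, G z ∂ρ
  have hI : 0 < I := hε.trans_le (integral_mem_Icc_of_mem_Icc hφm hφ).1
  have hc : 0 < c := hε.trans_le (integral_mem_Icc_of_mem_Icc hGm hG).1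
  have iφ := Integrable.of_mem_Icc ε A hφm.aemeasurable (ae_of_all ρ hφ)
  have iG := Integrable.of_mem_Icc ε A hGm.aemeasurable (ae_of_all ρ hG)
  have hpt : ∀ z, φ z * log (G z)
      ≤ φ z * log (φ z) + (log c - log I) * φ z + (I / c * G z - φ z) := by
    intro z
    have hφz := hε.trans_le (hφ z).1
    have hGz := hε.trans_le (hG z).1
    have h := mul_log_add_sub_le_mul_log hφz (by positivity : 0 < I / c * G z)
    rw [log_mul (by positivity) hGz.ne', log_div hI.ne' hc.ne'] at h
    linarith
  have iφlogφ := integrable_mul_log_of_mem_Icc (ρ := ρ) hε hφm hφm hφ hφ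
  have i1 : Integrable (fun z => φ z * log (φ z) + (log c - log I) * φ z) ρ :=
    iφlogφ.add (iφ.const_mul _)
  have i2 : Integrable (fun z => I / c * G z - φ z) ρ := (iG.const_mul _).sub iφ
  have hmono : ∫ z, φ z * log (G z) ∂ρ
      ≤ ∫ z, (φ z * log (φ z) + (log c - log I) * φ z + (I / c * G z - φ z)) ∂ρ :=
    integral_mono (integrable_mul_log_of_mem_Icc hε hφm hGm hφ hG) (i1.add i2) hpt
  rw [integral_add i1 i2, integral_add iφlogφ (iφ.const_mul _), integral_sub (iG.const_mul _) iφ,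
    integral_const_mul, integral_const_mul, div_mul_cancel₀ _ hc.ne'] at hmono
  rw [entropy]
  linarith

lemma entropy_exp_le_psi_mul_variance {g : α → ℝ} {C β : ℝ} (hβ : 0 ≤ β) (hg : Measurable g)
    (hC : ∀ z, |g z| ≤ C) (hg1 : ∀ z, g z - ∫ w, g w ∂ρ ≤ 1) :
    entropy ρ (fun z => exp (β * g z))
      ≤ psi β * variance g ρ * ∫ z, exp (β * g z) ∂ρ := by
  set m := ∫ w, g w ∂ρ
  set Z := ∫ z, exp (β * g z) ∂ρ
  have hint : ∀ {h : ℝ → ℝ}, Continuous h → Integrable (fun z => h (g z)) ρ :=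
    integrable_comp_of_abs_le hg hC
  have hZ : 0 < Z := integral_exp_pos (hint (h := fun s => exp (β * s)) (by fun_prop))
  have hjensen : exp (β * m) ≤ Z := by
    have h := convexOn_exp.map_integral_le continuous_exp.continuousOn isClosed_univ
      (ae_of_all _ fun z => Set.mem_univ (β * g z)) (hint (h := (β * ·)) (by fun_prop))
      (hint (h := fun s => exp (β * s)) (by fun_prop))
    rwa [integral_const_mul] at h
  have hlog := mul_log_add_sub_le_mul_log hZ (exp_pos (β * m))
  rw [log_exp] at hlog
  have hpsi : ∀ z, exp (β * g z) * (β * g z) - β * m * exp (β * g z) - exp (β * g z) + exp (β * m)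
      = exp (β * m) * psi (β * (g z - m)) := by
    intro z
    have : exp (β * g z) = exp (β * m) * exp (β * (g z - m)) := by rw [← exp_add]; ring_nf
    rw [this, psi]
    ring
  have hbound : ∫ z, exp (β * m) * psi (β * (g z - m)) ∂ρ
      ≤ ∫ z, exp (β * m) * (psi β * (g z - m) ^ 2) ∂ρ :=
    integral_mono (hint (h := fun s => exp (β * m) * psi (β * (s - m))) (by unfold psi; fun_prop))
      (hint (h := fun s => exp (β * m) * (psi β * (s - m) ^ 2)) (by fun_prop))
      fun z => mul_le_mul_of_nonneg_left (psi_mul_le_psi_mul_sq hβ (hg1 z)) (exp_pos _).le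
  have iE := hint (h := fun s => exp (β * s)) (by fun_prop)
  have iEg := hint (h := fun s => exp (β * s) * (β * s)) (by fun_prop)
  have hlin : ∫ z, (exp (β * g z) * (β * g z) - β * m * exp (β * g z) - exp (β * g z)
      + exp (β * m)) ∂ρ = ∫ z, exp (β * g z) * (β * g z) ∂ρ - Z * (β * m) - Z + exp (β * m) := by
    rw [integral_add (by fun_prop) (by fun_prop), integral_sub (by fun_prop) iE,
      integral_sub iEg (by fun_prop), integral_const_mul, integral_const]
    simp only [probReal_univ, one_smul]
    ring
  simp_rw [← hpsi, hlin, integral_const_mul] at hbound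
  have hV : 0 ≤ psi β * variance g ρ := mul_nonneg (psi_nonneg β) (variance_nonneg g ρ)
  rw [variance_eq_integral hg.aemeasurable] at hV ⊢
  calc entropy ρ (fun z => exp (β * g z))
      = ∫ z, exp (β * g z) * (β * g z) ∂ρ - Z * log Z := by simp only [entropy, log_exp]; rfl
    _ ≤ exp (β * m) * (psi β * ∫ z, (g z - m) ^ 2 ∂ρ) := by linarith
    _ ≤ Z * (psi β * ∫ z, (g z - m) ^ 2 ∂ρ) := by gcongr
    _ = _ := by ring

end OneDimensional

section Product

variable {δ : Type*} [DecidableEq δ] {X : δ → Type*} [∀ i, MeasurableSpace (X i)]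
  {μ : ∀ i, Measure (X i)} [∀ i, IsProbabilityMeasure (μ i)]

theorem measurable_integral_update {g : (∀ i, X i) → ℝ} (hg : Measurable g) (k : δ) :
    Measurable fun x => ∫ y, g (Function.update x k y) ∂μ k :=
  (hg.comp measurable_update').stronglyMeasurable.integral_prod_right'.measurable

variable [Fintype δ] (μ)

theorem measurePreserving_update_prod (k : δ) :
    MeasurePreserving (fun p : (∀ i, X i) × X k => Function.update p.1 k p.2)
      ((Measure.pi μ).prod (μ k)) (Measure.pi μ) := by
  refine ⟨measurable_update', (Measure.pi_eq fun s hs => ?_).symm⟩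
  have hpre : (fun p : (∀ i, X i) × X k => Function.update p.1 k p.2) ⁻¹' Set.univ.pi s
      = Set.univ.pi (Function.update s k Set.univ) ×ˢ s k := by
    ext ⟨x, y⟩
    simp only [Set.mem_preimage, Set.mem_pi, Set.mem_univ, true_implies, Set.mem_prod]
    constructor
    · intro h
      refine ⟨fun i => ?_, by simpa using h k⟩
      rcases eq_or_ne i k with rfl | hi
      · simp
      · simpa [hi] using h i
    · rintro ⟨hx, hy⟩ i
      rcases eq_or_ne i k with rfl | hi
      · simpa using hy
      · simpa [hi] using hx i
  have hupd : ∀ i, μ i (Function.update s k Set.univ i)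
      = Function.update (fun i => μ i (s i)) k 1 i := by
    intro i
    rcases eq_or_ne i k with rfl | hi
    · simp
    · simp [hi]
  rw [Measure.map_apply measurable_update' (MeasurableSet.univ_pi hs), hpre, Measure.prod_prod,
    Measure.pi_pi, Finset.prod_congr rfl fun i _ => hupd i,
    Finset.prod_update_of_mem (Finset.mem_univ k),
    Finset.prod_eq_mul_prod_sdiff_singleton_of_mem (Finset.mem_univ k)]
  ring

theorem integral_integral_update {E : Type*} [NormedAddCommGroup E] [NormedSpace ℝ E]
    {g : (∀ i, X i) → E} (hg : Integrable g (Measure.pi μ)) (k : δ) :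
    ∫ x, ∫ y, g (Function.update x k y) ∂μ k ∂Measure.pi μ = ∫ x, g x ∂Measure.pi μ := by
  have hmp := measurePreserving_update_prod μ k
  have hi : Integrable (fun p : (∀ i, X i) × X k => g (Function.update p.1 k p.2))
      ((Measure.pi μ).prod (μ k)) := hmp.integrable_comp_of_integrable hg
  rw [← integral_prod _ hi, ← integral_map hmp.measurable.aemeasurable
    (hmp.map_eq.symm ▸ hg.aestronglyMeasurable), hmp.map_eq]

theorem MeasureTheory.Integrable.integral_update {E : Type*} [NormedAddCommGroup E]
    [NormedSpace ℝ E]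
    {g : (∀ i, X i) → E} (hg : Integrable g (Measure.pi μ)) (k : δ) :
    Integrable (fun x => ∫ y, g (Function.update x k y) ∂μ k) (Measure.pi μ) :=
  ((measurePreserving_update_prod μ k).integrable_comp_of_integrable hg).integral_prod_left

end Product

section RealMarginal

variable {δ : Type*} [DecidableEq δ] {X : δ → Type*} [∀ i, MeasurableSpace (X i)]
  (μ : ∀ i, Measure (X i))

/-- Only meaningful for `F ≥ 0`, since `ENNReal.ofReal` truncates negative values to `0`. -/
noncomputable def realMarginal (s : Finset δ) (F : (∀ i, X i) → ℝ) (x : ∀ i, X i) : ℝ :=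
  ((∫⋯∫⁻_s, fun z => ENNReal.ofReal (F z) ∂μ) x).toReal

variable {μ} {F : (∀ i, X i) → ℝ} {a b : ℝ}

theorem realMarginal_empty (hF : ∀ z, 0 ≤ F z) : realMarginal μ ∅ F = F := by
  ext x
  simp [realMarginal, ENNReal.toReal_ofReal (hF x)]

theorem realMarginal_update_of_mem {s : Finset δ} {k : δ} (hk : k ∈ s) (x : ∀ i, X i) (y : X k) :
    realMarginal μ s F (Function.update x k y) = realMarginal μ s F x := by
  rw [realMarginal, lmarginal_update_of_mem μ hk, realMarginal]

variable [∀ i, IsProbabilityMeasure (μ i)]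

theorem lmarginal_ofReal_mem_Icc (hF : ∀ z, F z ∈ Set.Icc a b) (s : Finset δ) (x : ∀ i, X i) :
    (∫⋯∫⁻_s, fun z => ENNReal.ofReal (F z) ∂μ) x
      ∈ Set.Icc (ENNReal.ofReal a) (ENNReal.ofReal b) := by
  have hconst : ∀ c, (∫⋯∫⁻_s, (fun _ => c) ∂μ) x = c := fun c => by simp [lmarginal]
  rw [← hconst (ENNReal.ofReal a), ← hconst (ENNReal.ofReal b)]
  exact ⟨lmarginal_mono (fun z => ENNReal.ofReal_le_ofReal (hF z).1) x,
    lmarginal_mono (fun z => ENNReal.ofReal_le_ofReal (hF z).2) x⟩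

theorem realMarginal_mem_Icc (ha : 0 ≤ a) (hF : ∀ z, F z ∈ Set.Icc a b) (s : Finset δ)
    (x : ∀ i, X i) : realMarginal μ s F x ∈ Set.Icc a b := by
  obtain ⟨hlo, hhi⟩ := lmarginal_ofReal_mem_Icc (μ := μ) hF s x
  exact ⟨(ENNReal.ofReal_le_iff_le_toReal (ne_top_of_le_ne_top ENNReal.ofReal_ne_top hhi)).1 hlo,
    ENNReal.toReal_le_of_le_ofReal (ha.trans ((hF x).1.trans (hF x).2)) hhi⟩

theorem Measurable.realMarginal (hF : Measurable F) (s : Finset δ) :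
    Measurable (realMarginal μ s F) :=
  (hF.ennreal_ofReal.lmarginal μ).ennreal_toReal

theorem realMarginal_insert (hFm : Measurable F) (hF : ∀ z, F z ∈ Set.Icc a b)
    {s : Finset δ} {k : δ} (hk : k ∉ s) (x : ∀ i, X i) :
    realMarginal μ (insert k s) F x = ∫ y, realMarginal μ s F (Function.update x k y) ∂μ k := by
  rw [realMarginal, lmarginal_insert _ hFm.ennreal_ofReal hk, ← integral_toReal]
  · rfl
  · exact ((hFm.ennreal_ofReal.lmarginal μ).comp (measurable_update x)).aemeasurable
  · exact ae_of_all _ fun y =>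
      (lmarginal_ofReal_mem_Icc hF s _).2.trans_lt ENNReal.ofReal_lt_top

theorem realMarginal_univ [Fintype δ] (hFm : Measurable F) (hF : ∀ z, 0 ≤ F z) (x : ∀ i, X i) :
    realMarginal μ Finset.univ F x = ∫ z, F z ∂Measure.pi μ := by
  rw [realMarginal, lmarginal_univ, integral_eq_lintegral_of_nonneg_ae (ae_of_all _ hF)
    hFm.aestronglyMeasurable]

end RealMarginal

section Tensorization

variable {δ : Type*} [Fintype δ] [DecidableEq δ] {X : δ → Type*} [∀ i, MeasurableSpace (X i)]
  {μ : ∀ i, Measure (X i)} [∀ i, IsProbabilityMeasure (μ i)]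
  {F : (∀ i, X i) → ℝ} {ε A : ℝ}

theorem integrable_entropy_update (hε : 0 < ε) (hFm : Measurable F)
    (hF : ∀ z, F z ∈ Set.Icc ε A) (k : δ) :
    Integrable (fun x => entropy (μ k) fun y => F (Function.update x k y)) (Measure.pi μ) := by
  have hE : ∀ x, ∫ y, F (Function.update x k y) ∂μ k ∈ Set.Icc ε A := fun x =>
    integral_mem_Icc_of_mem_Icc (hFm.comp (measurable_update x)) fun y => hF _
  have hEm := measurable_integral_update (μ := μ) hFm k
  exact ((integrable_mul_log_of_mem_Icc hε hFm hFm hF hF).integral_update μ k).sub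
    (integrable_mul_log_of_mem_Icc hε hEm hEm hE hE)

theorem integral_mul_log_realMarginal_sub_le (hε : 0 < ε) (hFm : Measurable F)
    (hF : ∀ z, F z ∈ Set.Icc ε A) {s : Finset δ} {k : δ} (hk : k ∉ s) :
    ∫ x, F x * log (realMarginal μ s F x) ∂Measure.pi μ
        - ∫ x, F x * log (realMarginal μ (insert k s) F x) ∂Measure.pi μ
      ≤ ∫ x, entropy (μ k) (fun y => F (Function.update x k y)) ∂Measure.pi μ := by
  have hT : ∀ t x, realMarginal μ t F x ∈ Set.Icc ε A := realMarginal_mem_Icc hε.le hF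
  have hTm : ∀ t, Measurable (realMarginal μ t F) := hFm.realMarginal
  have hE : ∀ x, ∫ y, F (Function.update x k y) ∂μ k ∈ Set.Icc ε A := fun x =>
    integral_mem_Icc_of_mem_Icc (hFm.comp (measurable_update x)) fun y => hF _
  have hEm := measurable_integral_update (μ := μ) hFm k
  have hΦ : ∀ t, Integrable (fun x => F x * log (realMarginal μ t F x)) (Measure.pi μ) :=
    fun t => integrable_mul_log_of_mem_Icc hε hFm (hTm t) hF (hT t)
  have hinner : ∫ x, F x * log (realMarginal μ (insert k s) F x) ∂Measure.pi μ
      = ∫ x, (∫ y, F (Function.update x k y) ∂μ k) * log (realMarginal μ (insert k s) F x)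
          ∂Measure.pi μ := by
    rw [← integral_integral_update μ (hΦ _) k]
    simp_rw [realMarginal_update_of_mem (Finset.mem_insert_self k s), integral_mul_const]
  have i1 := (hΦ s).integral_update μ k
  have i2 := integrable_mul_log_of_mem_Icc (ρ := Measure.pi μ) hε hEm (hTm (insert k s)) hE (hT _)
  rw [← integral_integral_update μ (hΦ s) k, hinner, ← integral_sub i1 i2]
  refine integral_mono (i1.sub i2) (integrable_entropy_update hε hFm hF k) fun x => ?_
  rw [realMarginal_insert hFm hF hk]
  exact integral_mul_log_sub_le_entropy hε (hFm.comp (measurable_update x))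
    ((hTm s).comp (measurable_update x)) (fun y => hF _) fun y => hT s _

theorem entropy_pi_le_sum_integral_entropy (hε : 0 < ε) (hFm : Measurable F)
    (hF : ∀ z, F z ∈ Set.Icc ε A) :
    entropy (Measure.pi μ) F
      ≤ ∑ k, ∫ x, entropy (μ k) (fun y => F (Function.update x k y)) ∂Measure.pi μ := by
  have key : ∀ s : Finset δ, ∫ x, F x * log (F x) ∂Measure.pi μ
      - ∫ x, F x * log (realMarginal μ s F x) ∂Measure.pi μ
      ≤ ∑ k ∈ s, ∫ x, entropy (μ k) (fun y => F (Function.update x k y)) ∂Measure.pi μ := by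
    intro s
    induction s using Finset.induction_on with
    | empty => simp [realMarginal_empty (μ := μ) fun z => hε.le.trans (hF z).1]
    | insert k s hk ih =>
      rw [Finset.sum_insert hk]
      linarith [integral_mul_log_realMarginal_sub_le (μ := μ) hε hFm hF hk]
  have h := key Finset.univ
  simp_rw [realMarginal_univ (μ := μ) hFm fun z => hε.le.trans (hF z).1, integral_mul_const] at h
  exact h

end Tensorization

theorem canEntropy_eq_entropy_div {α : Type*} [MeasurableSpace α] (ν : Measure α) (f : α → ℝ)
    (β : ℝ) :
    canEntropy ν f β = entropy ν (fun x => exp (β * f x)) / ∫ x, exp (β * f x) ∂ν := by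
  have h : ∫ x, exp (β * f x) * log (exp (β * f x)) ∂ν = β * ∫ x, f x * exp (β * f x) ∂ν := by
    rw [← integral_const_mul]
    congr 1 with x
    rw [log_exp]
    ring
  rcases eq_or_ne (∫ x, exp (β * f x) ∂ν) 0 with hZ | hZ
  · simp [canEntropy, thermalExp, entropy, hZ]
  · rw [canEntropy, thermalExp, entropy, h]
    field_simp

section ConditionalVariance

variable {n : ℕ} {Ω : Fin n → Type*} [∀ k, MeasurableSpace (Ω k)] {μ : ∀ k, Measure (Ω k)}
  {g : (∀ i, Ω i) → ℝ}

theorem condExpK_update (k : Fin n) (x : ∀ i, Ω i) (y : Ω k) :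
    condExpK μ k g (Function.update x k y) = condExpK μ k g x := by
  simp [condExpK]

theorem condVarK_update (k : Fin n) (x : ∀ i, Ω i) (y : Ω k) :
    condVarK μ k g (Function.update x k y) = condVarK μ k g x := by
  simp [condVarK, condExpK_update]

theorem condVarK_eq_variance (hg : Measurable g) (k : Fin n) (x : ∀ i, Ω i) :
    condVarK μ k g x = variance (fun y => g (Function.update x k y)) (μ k) := by
  rw [variance_eq_integral (X := fun y => g (Function.update x k y))
    (hg.comp (measurable_update x)).aemeasurable]
  rfl

variable [∀ k, IsProbabilityMeasure (μ k)]

theorem Measurable.condVarK (hg : Measurable g) (k : Fin n) : Measurable (condVarK μ k g) :=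
  StronglyMeasurable.measurable <| StronglyMeasurable.integral_prod_right'
    (f := fun p : (∀ i, Ω i) × Ω k => (g (Function.update p.1 k p.2) - condExpK μ k g p.1) ^ 2)
    (((hg.comp measurable_update').sub
      ((measurable_integral_update hg k).comp measurable_fst)).pow_const 2).stronglyMeasurable

theorem condVarK_mem_Icc {C : ℝ} (hg : Measurable g) (hC : ∀ x, |g x| ≤ C) (k : Fin n)
    (x : ∀ i, Ω i) : condVarK μ k g x ∈ Set.Icc 0 (C ^ 2) := by
  rw [condVarK_eq_variance hg]
  refine ⟨variance_nonneg _ _, ?_⟩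
  have h := variance_le_sq_of_bounded (μ := μ k)
    (ae_of_all _ fun y => abs_le.1 (hC (Function.update x k y)))
    (hg.comp (measurable_update x)).aemeasurable
  rwa [sub_neg_eq_add, ← two_mul, mul_div_cancel_left₀ _ two_ne_zero] at h

theorem integrable_condVarK_mul {C : ℝ} (hg : Measurable g) (hC : ∀ x, |g x| ≤ C) (k : Fin n)
    {G : (∀ i, Ω i) → ℝ} (hG : Integrable G (Measure.pi μ)) :
    Integrable (fun x => condVarK μ k g x * G x) (Measure.pi μ) :=
  hG.bdd_mul (hg.condVarK k).aestronglyMeasurable <| ae_of_all _ fun x => by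
    obtain ⟨h0, hC⟩ := condVarK_mem_Icc (μ := μ) hg hC k x
    rwa [Real.norm_eq_abs, abs_of_nonneg h0]

end ConditionalVariance

theorem integral_entropy_update_exp_le {n : ℕ} {Ω : Fin n → Type*} [∀ k, MeasurableSpace (Ω k)]
    {μ : ∀ k, Measure (Ω k)} [∀ k, IsProbabilityMeasure (μ k)] {f : (∀ i, Ω i) → ℝ} {C β : ℝ}
    (hf : Measurable f) (hC : ∀ x, |f x| ≤ C) {k : Fin n}
    (h1 : ∀ x, f x - condExpK μ k f x ≤ 1) (hβ : 0 ≤ β) :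
    ∫ x, entropy (μ k) (fun y => exp (β * f (Function.update x k y))) ∂Measure.pi μ
      ≤ psi β * ∫ x, condVarK μ k f x * exp (β * f x) ∂Measure.pi μ := by
  have hF : ∀ x, exp (β * f x) ∈ Set.Icc (exp (-(β * C))) (exp (β * C)) := fun x =>
    exp_mul_mem_Icc_of_abs_le hβ (hC x)
  have hFm : Measurable fun x => exp (β * f x) := by fun_prop
  have iVF := integrable_condVarK_mul hf hC k
    (Integrable.of_mem_Icc _ _ hFm.aemeasurable (ae_of_all (Measure.pi μ) hF))
  calc ∫ x, entropy (μ k) (fun y => exp (β * f (Function.update x k y))) ∂Measure.pi μ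
      ≤ ∫ x, psi β * ∫ y, condVarK μ k f (Function.update x k y)
          * exp (β * f (Function.update x k y)) ∂μ k ∂Measure.pi μ := by
        refine integral_mono (integrable_entropy_update (exp_pos _) hFm hF k)
          ((iVF.integral_update μ k).const_mul _) fun x => ?_
        have hslice : ∀ y, f (Function.update x k y) - ∫ w, f (Function.update x k w) ∂μ k ≤ 1 :=
          fun y => by
            have h := h1 (Function.update x k y)
            rwa [condExpK_update] at h
        calc entropy (μ k) (fun y => exp (β * f (Function.update x k y)))
            ≤ psi β * variance (fun y => f (Function.update x k y)) (μ k)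
                * ∫ y, exp (β * f (Function.update x k y)) ∂μ k :=
              entropy_exp_le_psi_mul_variance hβ (hf.comp (measurable_update x)) (fun y => hC _)
                hslice
          _ = _ := by
              simp_rw [condVarK_update, integral_const_mul, condVarK_eq_variance hf]
              ring
    _ = psi β * ∫ x, condVarK μ k f x * exp (β * f x) ∂Measure.pi μ := by
        rw [integral_const_mul, integral_integral_update μ iVF]

section Statements

variable {n : ℕ} {Ω : Fin n → Type*} [∀ k, MeasurableSpace (Ω k)]

theorem stmt_11 (μ : ∀ k, Measure (Ω k)) [∀ k, IsProbabilityMeasure (μ k)]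
    (f : (∀ i, Ω i) → ℝ) (hf : Measurable f) (C : ℝ) (hC : ∀ x, |f x| ≤ C)
    (h1 : ∀ k x, f x - condExpK μ k f x ≤ 1) (β : ℝ) (hβ : 0 < β) :
    canEntropy (Measure.pi μ) f β
      ≤ (β * Real.exp β - Real.exp β + 1) *
          thermalExp (Measure.pi μ) β f (fun x => ∑ k, condVarK μ k f x) := by
  have hF : ∀ x, exp (β * f x) ∈ Set.Icc (exp (-(β * C))) (exp (β * C)) := fun x =>
    exp_mul_mem_Icc_of_abs_le hβ.le (hC x)
  have hFm : Measurable fun x => exp (β * f x) := by fun_prop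
  have iF := Integrable.of_mem_Icc _ _ hFm.aemeasurable (ae_of_all (Measure.pi μ) hF)
  have hent : entropy (Measure.pi μ) (fun x => exp (β * f x))
      ≤ psi β * ∫ x, (∑ k, condVarK μ k f x) * exp (β * f x) ∂Measure.pi μ :=
    calc entropy (Measure.pi μ) (fun x => exp (β * f x))
        ≤ ∑ k, ∫ x, entropy (μ k) (fun y => exp (β * f (Function.update x k y)))
            ∂Measure.pi μ := entropy_pi_le_sum_integral_entropy (exp_pos _) hFm hF
      _ ≤ ∑ k, psi β * ∫ x, condVarK μ k f x * exp (β * f x) ∂Measure.pi μ :=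
          Finset.sum_le_sum fun k _ => integral_entropy_update_exp_le hf hC (h1 k) hβ.le
      _ = _ := by
          rw [← Finset.mul_sum, ← integral_finsetSum _ fun k _ =>
            integrable_condVarK_mul hf hC k iF]
          simp_rw [Finset.sum_mul]
  rw [canEntropy_eq_entropy_div, thermalExp, mul_div_assoc']
  exact div_le_div_of_nonneg_right hent (integral_exp_pos (f := fun x => β * f x) iF).le
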